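/- arXiv:1905.06843 — 4 statements merged into one kernel-verified Lean document; each statement's English description precedes it below -/
import Mathlib

section
/- Let n ≥ 1 and work in EuclideanSpace ℝ (Fin n). Let f : ℝⁿ → ℝⁿ be Lipschitz with constant L_f and let g : ℝⁿ → Matrix (Fin n) (Fin n) ℝ be Lipschitz with constant L_g with respect to the operator norm on matrices. Assume there exists g̲ > 0 such that ⟪v, g(x) v⟫ ≥ g̲ ‖v‖² for all x, v ∈ ℝⁿ. Fix x_i ∈ ℝⁿ, constants ũ ≥ 0, δ̃ ≥ 0, σ̲ > 0, and σ satisfying σ g̲ ≥ L_f + L_g ũ + σ̲. Let û : [0,∞) → ℝⁿ be a nominal input with ‖û(t)‖ ≤ ũ for all t ≥ 0, and let δ : [0,∞) → ℝⁿ be a disturbance with ‖δ(t)‖ ≤ δ̃ for all t ≥ 0. Let ê, e : [0,∞) → ℝⁿ be differentiable trajectories satisfying the nominal error dynamics ê'(t) = f(ê(t)+x_i) + g(ê(t)+x_i) û(t) and the uncertain error dynamics e'(t) = f(e(t)+x_i) + g(e(t)+x_i) (û(t) − σ (e(t) − ê(t))) + δ(t), with e(0) = ê(0). Then for all t ≥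 0, ‖e(t) − ê(t)‖ ≤ δ̃/σ̲; i.e., the real trajectory remains inside the tube of radius δ̃/σ̲ centered at the nominal trajectory. -/
open scoped RealInnerProductSpace
open Set Filter Real Topology

set_option maxHeartbeats 1000000 in
/-- **Lemma 1 (tube invariance for the feedback law `u = û − σ q`)**: with `f` Lipschitz
(constant `L_f`), `g` Lipschitz in the operator norm (constant `L_g`), coercive input matrix
(`⟪v, g(x)v⟫ ≥ g̲‖v‖²` with `g̲ > 0`), bounded nominal input `‖û(t)‖ ≤ ũ`, bounded disturbance
`‖δ(t)‖ ≤ δ̃`, and gain `σ` with `σ g̲ ≥ L_f + L_g ũ + σ̲`, a real trajectory of the uncertain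
error dynamics under the feedback `u = û − σ(e − ê)`, starting from the nominal trajectory
(`e(0) = ê(0)`), stays in the tube of radius `δ̃/σ̲` around the nominal trajectory of the
nominal error dynamics. -/
theorem tube_mpc_lemma_one
    (n : ℕ) (hn : 1 ≤ n)
    (f : EuclideanSpace ℝ (Fin n) → EuclideanSpace ℝ (Fin n))
    (g : EuclideanSpace ℝ (Fin n) → Matrix (Fin n) (Fin n) ℝ)
    (Lf Lg : ℝ)
    (hf : ∀ x y, ‖f x - f y‖ ≤ Lf * ‖x - y‖)
    (hg : ∀ x y, ‖Matrix.toEuclideanCLM (𝕜 := ℝ) (g x) - Matrix.toEuclideanCLM (𝕜 := ℝ) (g y)‖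
      ≤ Lg * ‖x - y‖)
    (glow : ℝ) (hglow : 0 < glow)
    (hcoerc : ∀ (x v : EuclideanSpace ℝ (Fin n)),
      glow * ‖v‖ ^ 2 ≤ ⟪v, Matrix.toEuclideanCLM (𝕜 := ℝ) (g x) v⟫)
    (xi : EuclideanSpace ℝ (Fin n))
    (utilde δtilde σlow σ : ℝ)
    (hutilde : 0 ≤ utilde) (hδtilde : 0 ≤ δtilde) (hσlow : 0 < σlow)
    (hσ : Lf + Lg * utilde + σlow ≤ σ * glow)
    (uhat δ : ℝ → EuclideanSpace ℝ (Fin n))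
    (huhat : ∀ t : ℝ, 0 ≤ t → ‖uhat t‖ ≤ utilde)
    (hδ : ∀ t : ℝ, 0 ≤ t → ‖δ t‖ ≤ δtilde)
    (ehat e : ℝ → EuclideanSpace ℝ (Fin n))
    (hehat : ∀ t : ℝ, 0 ≤ t → HasDerivAt ehat
      (f (ehat t + xi) + Matrix.toEuclideanCLM (𝕜 := ℝ) (g (ehat t + xi)) (uhat t)) t)
    (he : ∀ t : ℝ, 0 ≤ t → HasDerivAt e
      (f (e t + xi)
        + Matrix.toEuclideanCLM (𝕜 := ℝ) (g (e t + xi)) (uhat t - σ • (e t - ehat t))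
        + δ t) t)
    (h0 : e 0 = ehat 0) :
    ∀ t : ℝ, 0 ≤ t → ‖e t - ehat t‖ ≤ δtilde / σlow := by
  classical
  -- nonnegativity of Lf, Lg and positivity of σ
  have hvec : ∃ v : EuclideanSpace ℝ (Fin n), ‖v‖ = 1 := by
    refine ⟨EuclideanSpace.single ⟨0, hn⟩ 1, ?_⟩
    simp [EuclideanSpace.norm_single]
  obtain ⟨v, hv⟩ := hvec
  have hv0 : ‖v - 0‖ = 1 := by rw [sub_zero]; exact hv
  have hLf : 0 ≤ Lf := by
    have h := hf v 0
    rw [hv0, mul_one] at h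
    exact le_trans (norm_nonneg _) h
  have hLg : 0 ≤ Lg := by
    have h := hg v 0
    rw [hv0, mul_one] at h
    exact le_trans (norm_nonneg _) h
  have hσpos : 0 < σ := by
    have h1 : 0 < σ * glow := by nlinarith
    nlinarith
  set q : ℝ → EuclideanSpace ℝ (Fin n) := fun t => e t - ehat t with hqdef
  set q' : ℝ → EuclideanSpace ℝ (Fin n) := fun t =>
    (f (e t + xi)
        + Matrix.toEuclideanCLM (𝕜 := ℝ) (g (e t + xi)) (uhat t - σ • (e t - ehat t))
        + δ t)
      - (f (ehat t + xi) + Matrix.toEuclideanCLM (𝕜 := ℝ) (g (ehat t + xi)) (uhat t))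
    with hq'def
  have hq : ∀ t : ℝ, 0 ≤ t → HasDerivAt q (q' t) t := fun t ht => (he t ht).sub (hehat t ht)
  -- decomposition of q'
  have hdecomp : ∀ t : ℝ, q' t
      = (f (e t + xi) - f (ehat t + xi))
        + ((Matrix.toEuclideanCLM (𝕜 := ℝ) (g (e t + xi))
            - Matrix.toEuclideanCLM (𝕜 := ℝ) (g (ehat t + xi))) (uhat t))
        + (-(σ • (Matrix.toEuclideanCLM (𝕜 := ℝ) (g (e t + xi)) (q t))))
        + δ t := by
    intro t
    simp only [hq'def, hqdef, map_sub, map_smul, ContinuousLinearMap.sub_apply]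
    abel
  -- key inner-product bound
  have key : ∀ t : ℝ, 0 ≤ t → ⟪q t, q' t⟫ ≤ -σlow * ‖q t‖ ^ 2 + δtilde * ‖q t‖ := by
    intro t ht
    have hA : ⟪q t, f (e t + xi) - f (ehat t + xi)⟫ ≤ Lf * ‖q t‖ ^ 2 := by
      have h1 := real_inner_le_norm (q t) (f (e t + xi) - f (ehat t + xi))
      have h2 := hf (e t + xi) (ehat t + xi)
      have h3 : (e t + xi) - (ehat t + xi) = q t := by simp [hqdef]
      rw [h3] at h2
      nlinarith [norm_nonneg (q t)]
    have hB : ⟪q t, (Matrix.toEuclideanCLM (𝕜 := ℝ) (g (e t + xi))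
            - Matrix.toEuclideanCLM (𝕜 := ℝ) (g (ehat t + xi))) (uhat t)⟫
        ≤ Lg * utilde * ‖q t‖ ^ 2 := by
      have h1 := real_inner_le_norm (q t) ((Matrix.toEuclideanCLM (𝕜 := ℝ) (g (e t + xi))
            - Matrix.toEuclideanCLM (𝕜 := ℝ) (g (ehat t + xi))) (uhat t))
      have h2 := ContinuousLinearMap.le_opNorm (Matrix.toEuclideanCLM (𝕜 := ℝ) (g (e t + xi))
            - Matrix.toEuclideanCLM (𝕜 := ℝ) (g (ehat t + xi))) (uhat t)
      have h3 := hg (e t + xi) (ehat t + xi)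
      have h4 : (e t + xi) - (ehat t + xi) = q t := by simp [hqdef]
      rw [h4] at h3
      have h5 := huhat t ht
      set M := Matrix.toEuclideanCLM (𝕜 := ℝ) (g (e t + xi))
            - Matrix.toEuclideanCLM (𝕜 := ℝ) (g (ehat t + xi)) with hM
      calc ⟪q t, M (uhat t)⟫ ≤ ‖q t‖ * ‖M (uhat t)‖ := h1
        _ ≤ ‖q t‖ * (‖M‖ * ‖uhat t‖) := by
            exact mul_le_mul_of_nonneg_left h2 (norm_nonneg _)
        _ ≤ ‖q t‖ * ((Lg * ‖q t‖) * utilde) := by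
            refine mul_le_mul_of_nonneg_left ?_ (norm_nonneg _)
            exact mul_le_mul h3 h5 (norm_nonneg _) (by positivity)
        _ = Lg * utilde * ‖q t‖ ^ 2 := by ring
    have hC : ⟪q t, -(σ • (Matrix.toEuclideanCLM (𝕜 := ℝ) (g (e t + xi)) (q t)))⟫
        ≤ -(σ * glow) * ‖q t‖ ^ 2 := by
      rw [inner_neg_right, real_inner_smul_right]
      have := hcoerc (e t + xi) (q t)
      nlinarith
    have hD : ⟪q t, δ t⟫ ≤ δtilde * ‖q t‖ := by
      have h1 := real_inner_le_norm (q t) (δ t)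
      have h2 := hδ t ht
      nlinarith [norm_nonneg (q t)]
    rw [hdecomp t, inner_add_right, inner_add_right, inner_add_right]
    nlinarith [sq_nonneg (‖q t‖)]
  -- the scalar function and its Dini derivative
  set φ : ℝ → ℝ := fun t => ‖q t‖ with hφdef
  set φ' : ℝ → ℝ := fun t => if q t = 0 then ‖q' t‖ else ⟪q t, q' t⟫ / ‖q t‖ with hφ'def
  intro T hT
  have main := le_gronwallBound_of_liminf_deriv_right_le (f := φ) (f' := φ')
    (δ := 0) (K := -σlow) (ε := δtilde) (a := 0) (b := T)
    (by -- continuity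
      intro x hx
      exact ((hq x hx.1).continuousAt.norm).continuousWithinAt)
    (by -- Dini condition
      intro x hx r hr
      have hx0 : 0 ≤ x := hx.1
      by_cases hqx : q x = 0
      · have hφ'x : φ' x = ‖q' x‖ := by simp [hφ'def, hqx]
        rw [hφ'x] at hr
        have h1 : Tendsto (slope q x) (𝓝[≠] x) (𝓝 (q' x)) :=
          hasDerivAt_iff_tendsto_slope.mp (hq x hx0)
        have h2 : Tendsto (fun z => ‖slope q x z‖) (𝓝[>] x) (𝓝 ‖q' x‖) :=
          (h1.norm).mono_left (nhdsWithin_mono x (fun z hz => ne_of_gt hz))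
        have hs : Tendsto (fun z => (z - x)⁻¹ * (φ z - φ x)) (𝓝[>] x) (𝓝 ‖q' x‖) := by
          apply h2.congr'
          filter_upwards [self_mem_nhdsWithin] with z hz
          have hzx : (0:ℝ) < z - x := sub_pos.mpr hz
          have hφx : φ x = 0 := by simp [hφdef, hqx]
          rw [slope_def_module, hqx, sub_zero, norm_smul, norm_inv, Real.norm_eq_abs,
            abs_of_pos hzx, hφx, sub_zero]
        exact (hs.eventually (eventually_lt_nhds hr)).frequently
      · have hqq : ⟪q x, q x⟫ ≠ 0 := by
          rw [real_inner_self_eq_norm_sq]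
          exact pow_ne_zero _ (norm_ne_zero_iff.mpr hqx)
        have h1 : HasDerivAt (fun t => ⟪q t, q t⟫) (⟪q x, q' x⟫ + ⟪q' x, q x⟫) x :=
          (hq x hx0).inner ℝ (hq x hx0)
        have h2 : HasDerivAt (fun t => Real.sqrt ⟪q t, q t⟫)
            (1 / (2 * Real.sqrt ⟪q x, q x⟫) * (⟪q x, q' x⟫ + ⟪q' x, q x⟫)) x :=
          (Real.hasDerivAt_sqrt hqq).comp x h1
        have h3 : HasDerivAt φ (φ' x) x := by
          have heq : (fun t => Real.sqrt ⟪q t, q t⟫) = φ := by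
            funext t; rw [hφdef]; exact (norm_eq_sqrt_real_inner (q t)).symm
          rw [← heq]
          convert h2 using 1
          simp only [hφ'def]
          rw [if_neg hqx, real_inner_comm (q' x) (q x), ← norm_eq_sqrt_real_inner]
          have hn0 : ‖q x‖ ≠ 0 := norm_ne_zero_iff.mpr hqx
          field_simp
          ring
        have hs : Tendsto (slope φ x) (𝓝[>] x) (𝓝 (φ' x)) :=
          (hasDerivAt_iff_tendsto_slope.mp h3).mono_left
            (nhdsWithin_mono x (fun z hz => ne_of_gt hz))
        have hev : ∀ᶠ z in 𝓝[>] x, (z - x)⁻¹ * (φ z - φ x) < r := by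
          filter_upwards [hs.eventually (eventually_lt_nhds hr)] with z hz
          simpa [slope_def_field, div_eq_inv_mul] using hz
        exact hev.frequently)
    (by simp [hφdef, hqdef, h0])
    (by -- derivative bound
      intro x hx
      have hx0 : 0 ≤ x := hx.1
      by_cases hqx : q x = 0
      · have hee : e x = ehat x := by
          have : e x - ehat x = 0 := hqx
          exact sub_eq_zero.mp this
        have hq'x : q' x = δ x := by
          rw [hdecomp x, hqx, hee]
          simp
        have hφ'x : φ' x = ‖q' x‖ := by simp [hφ'def, hqx]
        have hφx : φ x = 0 := by simp [hφdef, hqx]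
        rw [hφ'x, hq'x, hφx, mul_zero, zero_add]
        exact hδ x hx0
      · have hφpos : 0 < ‖q x‖ := norm_pos_iff.mpr hqx
        have hφ'x : φ' x = ⟪q x, q' x⟫ / ‖q x‖ := by simp [hφ'def, hqx]
        have hφx : φ x = ‖q x‖ := rfl
        rw [hφ'x, hφx, div_le_iff₀ hφpos]
        calc ⟪q x, q' x⟫ ≤ -σlow * ‖q x‖ ^ 2 + δtilde * ‖q x‖ := key x hx0
          _ = (-σlow * ‖q x‖ + δtilde) * ‖q x‖ := by ring)
  have hb := main T ⟨hT, le_refl T⟩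
  have hgb : gronwallBound 0 (-σlow) δtilde (T - 0) ≤ δtilde / σlow := by
    have hKne : (-σlow) ≠ 0 := neg_ne_zero.mpr (ne_of_gt hσlow)
    rw [gronwallBound_of_K_ne_0 hKne]
    have hE := Real.exp_pos (-σlow * (T - 0))
    have hd : δtilde / -σlow = -(δtilde / σlow) := by field_simp
    have hdd : 0 ≤ δtilde / σlow := by positivity
    rw [hd]
    nlinarith
  calc ‖e T - ehat T‖ = φ T := rfl
    _ ≤ gronwallBound 0 (-σlow) δtilde (T - 0) := hb
    _ ≤ δtilde / σlow := hgb
end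

section
/- Let n ≥ 1 and work in EuclideanSpace ℝ (Fin n). Let f : ℝⁿ → ℝⁿ be Lipschitz with constant L_f and let g : ℝⁿ → Matrix (Fin n) (Fin n) ℝ be Lipschitz with constant L_g with respect to the operator norm on matrices. Assume there exists g̲ > 0 such that ⟪v, g(x) v⟫ ≥ g̲ ‖v‖² for all x, v ∈ ℝⁿ. Fix x_i ∈ ℝⁿ, constants ũ ≥ 0, δ̃ ≥ 0, σ̲ > 0, and σ satisfying σ g̲ ≥ L_f + L_g ũ + σ̲. Let û : [0,∞) → ℝⁿ satisfy ‖û(t)‖ ≤ ũ and let δ : [0,∞) → ℝⁿ satisfy ‖δ(t)‖ ≤ δ̃ for all t ≥ 0. Let ê, e : [0,∞) → ℝⁿ be differentiable trajectories satisfying ê'(t) = f(ê(t)+x_i) + g(ê(t)+x_i) û(t) and e'(t) = f(e(t)+x_i) + g(e(t)+x_i) (û(t) − σ (e(t) − ê(t))) + δ(t). If the initial deviation satisfies ‖e(0) − ê(0)‖ ≤ δ̃/σ̲, then ‖e(t) − ê(t)‖ ≤ δ̃/σ̲ for all t ≥ 0. In other words, the ball Q = {q ∈ ℝⁿ : ‖q‖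 ≤ δ̃/σ̲} is a robust invariant set for the deviation dynamics under the feedback u = û − σ q. -/
open scoped RealInnerProductSpace

/-! Writing `q = e - ê`, the feedback `-σ q` together with the coercivity of `g` makes
`⟪q, q'⟫ ≤ (L_f + L_g ũ - σ g̲) ‖q‖² + δ̃ ‖q‖ ≤ -σ̲ ‖q‖² + δ̃ ‖q‖`, which is negative as soon as
`‖q‖ > δ̃/σ̲`. So `‖q‖²` cannot cross any level `(δ̃/σ̲ + ε)²` upwards, by the fencing
argument for real functions. -/

section Deviation

variable {E : Type*} [NormedAddCommGroup E] [InnerProductSpace ℝ E]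
  (f : E → E) (G : E → E →L[ℝ] E) {Lf Lg glow σ : ℝ}

theorem inner_sub_deviation_le (hf : ∀ x y, ‖f x - f y‖ ≤ Lf * ‖x - y‖)
    (hG : ∀ x y, ‖G x - G y‖ ≤ Lg * ‖x - y‖) (hcoerc : ∀ x v, glow * ‖v‖ ^ 2 ≤ ⟪v, G x v⟫)
    (hσ : 0 ≤ σ) (x y u d : E) :
    ⟪x - y, (f x + G x (u - σ • (x - y)) + d) - (f y + G y u)⟫
      ≤ (Lf + Lg * ‖u‖ - σ * glow) * ‖x - y‖ ^ 2 + ‖d‖ * ‖x - y‖ := by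
  set q := x - y
  have hsplit : (f x + G x (u - σ • q) + d) - (f y + G y u)
      = (f x - f y) + (G x - G y) u - σ • G x q + d := by
    simp only [map_sub, map_smul, sub_apply]
    abel
  have hf_term : ⟪q, f x - f y⟫ ≤ ‖q‖ * (Lf * ‖q‖) :=
    (real_inner_le_norm _ _).trans (mul_le_mul_of_nonneg_left (hf x y) (norm_nonneg _))
  have hG_term : ⟪q, (G x - G y) u⟫ ≤ ‖q‖ * (Lg * ‖q‖ * ‖u‖) :=
    (real_inner_le_norm _ _).trans <| mul_le_mul_of_nonneg_left
      (((G x - G y).le_opNorm u).trans (mul_le_mul_of_nonneg_right (hG x y) (norm_nonneg _)))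
      (norm_nonneg _)
  have hfeedback : σ * (glow * ‖q‖ ^ 2) ≤ σ * ⟪q, G x q⟫ :=
    mul_le_mul_of_nonneg_left (hcoerc x q) hσ
  have hd_term : ⟪q, d⟫ ≤ ‖q‖ * ‖d‖ := real_inner_le_norm _ _
  rw [hsplit, inner_add_right, inner_sub_right, inner_add_right, real_inner_smul_right]
  linarith

theorem inner_sub_deviation_neg {utilde δtilde σlow : ℝ}
    (hf : ∀ x y, ‖f x - f y‖ ≤ Lf * ‖x - y‖)
    (hG : ∀ x y, ‖G x - G y‖ ≤ Lg * ‖x - y‖) (hcoerc : ∀ x v, glow * ‖v‖ ^ 2 ≤ ⟪v, G x v⟫)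
    (hglow : 0 < glow) (hσlow : 0 < σlow) (hgain : Lf + Lg * utilde + σlow ≤ σ * glow)
    {x y u d : E} (hu : ‖u‖ ≤ utilde) (hd : ‖d‖ ≤ δtilde) (hout : δtilde / σlow < ‖x - y‖) :
    ⟪x - y, (f x + G x (u - σ • (x - y)) + d) - (f y + G y u)⟫ < 0 := by
  have hδ : δtilde < σlow * ‖x - y‖ := by rwa [div_lt_iff₀' hσlow] at hout
  have hxy : 0 < ‖x - y‖ :=
    pos_of_mul_pos_right ((norm_nonneg d).trans_lt (hd.trans_lt hδ)) hσlow.le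
  have hLf : 0 ≤ Lf := nonneg_of_mul_nonneg_left ((norm_nonneg _).trans (hf x y)) hxy
  have hLg : 0 ≤ Lg := nonneg_of_mul_nonneg_left ((norm_nonneg _).trans (hG x y)) hxy
  have hσ : 0 ≤ σ := by
    refine (pos_of_mul_pos_left ?_ hglow.le).le
    nlinarith [(norm_nonneg u).trans hu]
  calc _ ≤ (Lf + Lg * ‖u‖ - σ * glow) * ‖x - y‖ ^ 2 + ‖d‖ * ‖x - y‖ :=
        inner_sub_deviation_le f G hf hG hcoerc hσ x y u d
    _ ≤ -σlow * ‖x - y‖ ^ 2 + δtilde * ‖x - y‖ := by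
        gcongr ?_ * _ + ?_ * _
        nlinarith
    _ < 0 := by nlinarith

end Deviation

theorem norm_le_of_inner_deriv_neg_outside {E : Type*} [NormedAddCommGroup E]
    [InnerProductSpace ℝ E] {q q' : ℝ → E} {r : ℝ}
    (hq : ∀ t, 0 ≤ t → HasDerivAt q (q' t) t)
    (hinward : ∀ t, 0 ≤ t → r < ‖q t‖ → ⟪q t, q' t⟫ < 0) (h0 : ‖q 0‖ ≤ r) :
    ∀ t, 0 ≤ t → ‖q t‖ ≤ r := by
  intro t ht
  refine le_of_forall_pos_le_add fun ε hε => ?_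
  have hrε : 0 ≤ r + ε := by linarith [(norm_nonneg (q 0)).trans h0]
  have hfence : ∀ ⦃s⦄, s ∈ Set.Icc 0 t → ‖q s‖ ^ 2 ≤ (r + ε) ^ 2 := by
    refine image_le_of_deriv_right_lt_deriv_boundary (f := (‖q ·‖ ^ 2))
      (fun s hs => (hq s hs.1).norm_sq.continuousAt.continuousWithinAt)
      (fun s hs => (hq s hs.1).norm_sq.hasDerivWithinAt) (by gcongr; linarith)
      (fun _ => hasDerivAt_const _ ((r + ε) ^ 2)) fun s hs hlevel => ?_
    have hnorm : ‖q s‖ = r + ε := (pow_left_inj₀ (norm_nonneg _) hrε two_ne_zero).1 hlevel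
    linarith [hinward s hs.1 (by linarith)]
  exact le_of_sq_le_sq (hfence ⟨ht, le_rfl⟩) hrε

theorem tube_mpc_rci_set_general
    (n : ℕ)
    (f : EuclideanSpace ℝ (Fin n) → EuclideanSpace ℝ (Fin n))
    (g : EuclideanSpace ℝ (Fin n) → Matrix (Fin n) (Fin n) ℝ)
    (Lf Lg : ℝ)
    (hf : ∀ x y, ‖f x - f y‖ ≤ Lf * ‖x - y‖)
    (hg : ∀ x y, ‖Matrix.toEuclideanCLM (𝕜 := ℝ) (g x) - Matrix.toEuclideanCLM (𝕜 := ℝ) (g y)‖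
      ≤ Lg * ‖x - y‖)
    (glow : ℝ) (hglow : 0 < glow)
    (hcoerc : ∀ (x v : EuclideanSpace ℝ (Fin n)),
      glow * ‖v‖ ^ 2 ≤ ⟪v, Matrix.toEuclideanCLM (𝕜 := ℝ) (g x) v⟫)
    (xi : EuclideanSpace ℝ (Fin n))
    (utilde δtilde σlow σ : ℝ)
    (hσlow : 0 < σlow)
    (hσ : Lf + Lg * utilde + σlow ≤ σ * glow)
    (uhat δ : ℝ → EuclideanSpace ℝ (Fin n))
    (huhat : ∀ t : ℝ, 0 ≤ t → ‖uhat t‖ ≤ utilde)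
    (hδ : ∀ t : ℝ, 0 ≤ t → ‖δ t‖ ≤ δtilde)
    (ehat e : ℝ → EuclideanSpace ℝ (Fin n))
    (hehat : ∀ t : ℝ, 0 ≤ t → HasDerivAt ehat
      (f (ehat t + xi) + Matrix.toEuclideanCLM (𝕜 := ℝ) (g (ehat t + xi)) (uhat t)) t)
    (he : ∀ t : ℝ, 0 ≤ t → HasDerivAt e
      (f (e t + xi)
        + Matrix.toEuclideanCLM (𝕜 := ℝ) (g (e t + xi)) (uhat t - σ • (e t - ehat t))
        + δ t) t)
    (h0 : ‖e 0 - ehat 0‖ ≤ δtilde / σlow) :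
    ∀ t : ℝ, 0 ≤ t → ‖e t - ehat t‖ ≤ δtilde / σlow := by
  refine norm_le_of_inner_deriv_neg_outside (fun s hs => (he s hs).sub (hehat s hs))
    (fun s hs hout => ?_) h0
  rw [← add_sub_add_right_eq_sub (e s) (ehat s) xi] at hout ⊢
  exact inner_sub_deviation_neg f _ hf hg hcoerc hglow hσlow hσ (huhat s hs) (hδ s hs) hout

/-- **Robust control invariance form of Lemma 1**: under the same hypotheses as Lemma 1
(Lipschitz `f` and `g`, coercive input matrix, bounded nominal input and disturbance, gain
`σ g̲ ≥ L_f + L_g ũ + σ̲`), if the initial deviation satisfies `‖e(0) − ê(0)‖ ≤ δ̃/σ̲` then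
`‖e(t) − ê(t)‖ ≤ δ̃/σ̲` for all `t ≥ 0`; i.e. the ball `Q = {q : ‖q‖ ≤ δ̃/σ̲}` is a robust
invariant set for the deviation dynamics under the feedback `u = û − σ q`. -/
theorem tube_mpc_rci_set
    (n : ℕ) (hn : 1 ≤ n)
    (f : EuclideanSpace ℝ (Fin n) → EuclideanSpace ℝ (Fin n))
    (g : EuclideanSpace ℝ (Fin n) → Matrix (Fin n) (Fin n) ℝ)
    (Lf Lg : ℝ)
    (hf : ∀ x y, ‖f x - f y‖ ≤ Lf * ‖x - y‖)
    (hg : ∀ x y, ‖Matrix.toEuclideanCLM (𝕜 := ℝ) (g x) - Matrix.toEuclideanCLM (𝕜 := ℝ) (g y)‖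
      ≤ Lg * ‖x - y‖)
    (glow : ℝ) (hglow : 0 < glow)
    (hcoerc : ∀ (x v : EuclideanSpace ℝ (Fin n)),
      glow * ‖v‖ ^ 2 ≤ ⟪v, Matrix.toEuclideanCLM (𝕜 := ℝ) (g x) v⟫)
    (xi : EuclideanSpace ℝ (Fin n))
    (utilde δtilde σlow σ : ℝ)
    (hutilde : 0 ≤ utilde) (hδtilde : 0 ≤ δtilde) (hσlow : 0 < σlow)
    (hσ : Lf + Lg * utilde + σlow ≤ σ * glow)
    (uhat δ : ℝ → EuclideanSpace ℝ (Fin n))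
    (huhat : ∀ t : ℝ, 0 ≤ t → ‖uhat t‖ ≤ utilde)
    (hδ : ∀ t : ℝ, 0 ≤ t → ‖δ t‖ ≤ δtilde)
    (ehat e : ℝ → EuclideanSpace ℝ (Fin n))
    (hehat : ∀ t : ℝ, 0 ≤ t → HasDerivAt ehat
      (f (ehat t + xi) + Matrix.toEuclideanCLM (𝕜 := ℝ) (g (ehat t + xi)) (uhat t)) t)
    (he : ∀ t : ℝ, 0 ≤ t → HasDerivAt e
      (f (e t + xi)
        + Matrix.toEuclideanCLM (𝕜 := ℝ) (g (e t + xi)) (uhat t - σ • (e t - ehat t))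
        + δ t) t)
    (h0 : ‖e 0 - ehat 0‖ ≤ δtilde / σlow) :
    ∀ t : ℝ, 0 ≤ t → ‖e t - ehat t‖ ≤ δtilde / σlow :=
  tube_mpc_rci_set_general n f g Lf Lg hf hg glow hglow hcoerc xi utilde δtilde σlow σ hσlow hσ uhat
    δ huhat hδ ehat e hehat he h0
end

section
/- Let n ≥ 1 and work in EuclideanSpace ℝ (Fin n). Let q, h, δ ∈ ℝⁿ, let G be an n × n real matrix, and let L ≥ 0, g̲ > 0, σ̲ > 0, δ̃ ≥ 0 and σ be constants such that: (i) ‖h‖ ≤ L ‖q‖; (ii) ⟪q, G q⟫ ≥ g̲ ‖q‖²; (iii) ‖δ‖ ≤ δ̃; and (iv) σ g̲ − L ≥ σ̲. Then ⟪q, h − σ G q + δ⟫ ≤ (δ̃ − σ̲ ‖q‖) ‖q‖. In particular, if ‖q‖ > δ̃/σ̲ then ⟪q, h − σ G q + δ⟫ < 0. -/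
open scoped RealInnerProductSpace

/-- **Key inequality chain in the proof of Lemma 1**: if `‖h‖ ≤ L‖q‖`, the coercivity bound
`⟪q, G q⟫ ≥ g̲‖q‖²` holds, `‖δ‖ ≤ δ̃` and the gain satisfies `σ g̲ − L ≥ σ̲`, then the Lyapunov
derivative `⟪q, h − σ G q + δ⟫` is at most `(δ̃ − σ̲‖q‖)‖q‖`; in particular it is negative
whenever `‖q‖ > δ̃/σ̲`. -/
theorem lyapunov_derivative_chain_of_inequalities
    (n : ℕ) (hn : 1 ≤ n)
    (q h δ : EuclideanSpace ℝ (Fin n)) (G : Matrix (Fin n) (Fin n) ℝ)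
    (L glow σlow δtilde σ : ℝ)
    (hL : 0 ≤ L) (hglow : 0 < glow) (hσlow : 0 < σlow) (hδtilde : 0 ≤ δtilde)
    (hh : ‖h‖ ≤ L * ‖q‖)
    (hG : glow * ‖q‖ ^ 2 ≤ ⟪q, Matrix.toEuclideanCLM (𝕜 := ℝ) G q⟫)
    (hδ : ‖δ‖ ≤ δtilde)
    (hσ : σlow ≤ σ * glow - L) :
    ⟪q, h - σ • Matrix.toEuclideanCLM (𝕜 := ℝ) G q + δ⟫ ≤ (δtilde - σlow * ‖q‖) * ‖q‖
      ∧ (δtilde / σlow < ‖q‖ →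
        ⟪q, h - σ • Matrix.toEuclideanCLM (𝕜 := ℝ) G q + δ⟫ < 0) := by

  set Gq := Matrix.toEuclideanCLM (𝕜 := ℝ) G q with hGq
  have hσpos : 0 < σ := by nlinarith
  have h1 : ⟪q, h - σ • Gq + δ⟫ = ⟪q, h⟫ - σ * ⟪q, Gq⟫ + ⟪q, δ⟫ := by
    rw [inner_add_right, inner_sub_right, inner_smul_right]
  have hqh : ⟪q, h⟫ ≤ L * ‖q‖ ^ 2 := by
    calc ⟪q, h⟫ ≤ ‖q‖ * ‖h‖ := real_inner_le_norm q h
    _ ≤ ‖q‖ * (L * ‖q‖) := by nlinarith [norm_nonneg q]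
    _ = L * ‖q‖ ^ 2 := by ring
  have hqδ : ⟪q, δ⟫ ≤ δtilde * ‖q‖ := by
    calc ⟪q, δ⟫ ≤ ‖q‖ * ‖δ‖ := real_inner_le_norm q δ
    _ ≤ δtilde * ‖q‖ := by nlinarith [norm_nonneg q]
  have hmain : ⟪q, h - σ • Gq + δ⟫ ≤ (δtilde - σlow * ‖q‖) * ‖q‖ := by
    rw [h1]; nlinarith [norm_nonneg q]
  refine ⟨hmain, fun hq => ?_⟩
  have : δtilde < σlow * ‖q‖ := by
    rw [div_lt_iff₀ hσlow] at hq; linarith [hq]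
  have hqpos : 0 < ‖q‖ := lt_of_le_of_lt (by positivity) hq
  calc ⟪q, h - σ • Gq + δ⟫ ≤ (δtilde - σlow * ‖q‖) * ‖q‖ := hmain
  _ < 0 := by nlinarith
end

section
/- Let n ≥ 1 and work in EuclideanSpace ℝ (Fin n). Let σ̲ > 0 and δ̃ ≥ 0, and let q : ℝ → ℝⁿ be a differentiable function such that for all t ≥ 0, ⟪q(t), q'(t)⟫ ≤ (δ̃ − σ̲ ‖q(t)‖) ‖q(t)‖. If ‖q(0)‖ ≤ δ̃/σ̲, then ‖q(t)‖ ≤ δ̃/σ̲ for all t ≥ 0. -/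
open scoped RealInnerProductSpace

open Set

/- Fencing `f` by `c + ε (x - a + 1)`, which lies strictly above `c` on `[a, b]`, turns the
non-strict sign condition into the strict one required at the boundary. -/
theorem image_le_of_deriv_right_nonpos_of_gt {f f' : ℝ → ℝ} {a b c : ℝ}
    (hf : ContinuousOn f (Icc a b)) (hf' : ∀ x ∈ Ico a b, HasDerivWithinAt f (f' x) (Ici x) x)
    (ha : f a ≤ c) (bound : ∀ x ∈ Ico a b, c < f x → f' x ≤ 0) :
    ∀ ⦃x⦄, x ∈ Icc a b → f x ≤ c := by
  intro x hx
  have hfence : ∀ ε > 0, f x ≤ c + ε * (x - a + 1) := by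
    intro ε hε
    refine image_le_of_deriv_right_lt_deriv_boundary (B := fun t ↦ c + ε * (t - a + 1))
      (B' := fun _ ↦ ε) hf hf' (by linarith) (fun t ↦ ?_) (fun t ht hft ↦ ?_) hx
    · simpa using (((hasDerivAt_id t).sub_const a).add_const 1).const_mul ε |>.const_add c
    · have hc : c < f t := by rw [hft]; nlinarith [ht.1]
      exact (bound t ht hc).trans_lt hε
  have hlen : 0 < x - a + 1 := by linarith [hx.1]
  refine le_of_forall_pos_le_add fun ε hε ↦ ?_
  calc f x ≤ c + ε / (x - a + 1) * (x - a + 1) := hfence _ (div_pos hε hlen)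
    _ = c + ε := by field_simp

theorem norm_le_of_inner_deriv_nonpos_of_gt {E : Type*} [NormedAddCommGroup E]
    [InnerProductSpace ℝ E] {q q' : ℝ → E} {a r : ℝ} (hq : ∀ t, a ≤ t → HasDerivAt q (q' t) t)
    (ha : ‖q a‖ ≤ r) (bound : ∀ t, a ≤ t → r < ‖q t‖ → ⟪q t, q' t⟫ ≤ 0) :
    ∀ t, a ≤ t → ‖q t‖ ≤ r := by
  have hr : 0 ≤ r := (norm_nonneg _).trans ha
  intro t ht
  have hsq : ‖q t‖ ^ 2 ≤ r ^ 2 := by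
    refine image_le_of_deriv_right_nonpos_of_gt (f := (‖q ·‖ ^ 2))
      (f' := fun s ↦ 2 * ⟪q s, q' s⟫) (b := t) (fun s hs ↦ ?_) (fun s hs ↦ ?_)
      (pow_le_pow_left₀ (norm_nonneg _) ha 2) (fun s hs hgt ↦ ?_) ⟨ht, le_rfl⟩
    · exact (hq s hs.1).norm_sq.continuousAt.continuousWithinAt
    · exact (hq s hs.1).norm_sq.hasDerivWithinAt
    · have := bound s hs.1 (lt_of_pow_lt_pow_left₀ 2 (norm_nonneg _) hgt)
      linarith
  exact (pow_le_pow_iff_left₀ (norm_nonneg _) hr two_ne_zero).mp hsq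

theorem tube_ball_invariance_general
    (n : ℕ) (σlow δtilde : ℝ)
    (hσlow : 0 < σlow)
    (q : ℝ → EuclideanSpace ℝ (Fin n))
    (hq : Differentiable ℝ q)
    (hineq : ∀ t : ℝ, 0 ≤ t →
      ⟪q t, deriv q t⟫ ≤ (δtilde - σlow * ‖q t‖) * ‖q t‖)
    (h0 : ‖q 0‖ ≤ δtilde / σlow) :
    ∀ t : ℝ, 0 ≤ t → ‖q t‖ ≤ δtilde / σlow := by
  refine norm_le_of_inner_deriv_nonpos_of_gt (fun t _ ↦ (hq t).hasDerivAt) h0 fun t ht hgt ↦ ?_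
  have hdrift : δtilde - σlow * ‖q t‖ ≤ 0 := by
    rw [div_lt_iff₀ hσlow] at hgt
    linarith
  exact (hineq t ht).trans (mul_nonpos_of_nonpos_of_nonneg hdrift (norm_nonneg _))

/-- **Invariance step concluding the proof of Lemma 1**: if a differentiable curve
`q : ℝ → ℝⁿ` satisfies `⟪q(t), q'(t)⟫ ≤ (δ̃ − σ̲‖q(t)‖)‖q(t)‖` for all `t ≥ 0` and starts in the
ball of radius `δ̃/σ̲`, then it remains in that ball for all `t ≥ 0`. -/
theorem tube_ball_invariance
    (n : ℕ) (hn : 1 ≤ n) (σlow δtilde : ℝ)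
    (hσlow : 0 < σlow) (hδtilde : 0 ≤ δtilde)
    (q : ℝ → EuclideanSpace ℝ (Fin n))
    (hq : Differentiable ℝ q)
    (hineq : ∀ t : ℝ, 0 ≤ t →
      ⟪q t, deriv q t⟫ ≤ (δtilde - σlow * ‖q t‖) * ‖q t‖)
    (h0 : ‖q 0‖ ≤ δtilde / σlow) :
    ∀ t : ℝ, 0 ≤ t → ‖q t‖ ≤ δtilde / σlow :=
  tube_ball_invariance_general n σlow δtilde hσlow q hq hineq h0
end
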